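/- arXiv:2208.14762 — 3 statements merged into one kernel-verified Lean document; each statement's English description precedes it below -/
import Mathlib

section
/- Let X be a measure space with probability measure λ, β > 0, and H : X → ℝ measurable with e^{-βH} ∈ L¹(λ). Define the Gibbs free energy F_β(H) = −β^{-1} log ∫ e^{-βH} dλ. Then for every probability measure P absolutely continuous with respect to λ with finite relative entropy, F_β(H) ≤ ∫ H dP + β^{-1} Ent(P | λ), with equality iff dP = e^{-βH} dλ / ∫ e^{-βH} dλ (Gibbs variational principle). -/
/-!
Tilting `λ` by `f = -βH` gives the Gibbs measure `μ_β = λ.tilted f`, and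
`log (dP/dμ_β) = log (dP/dλ) - f + log Z` with `Z = ∫ e^{-βH} dλ`. Integrating against `P`
shows that `β (∫ H dP + β⁻¹ Ent(P | λ) - F_β(H))` is the Kullback–Leibler divergence of `P`
from `μ_β`, so the principle is Gibbs' inequality `KL ≥ 0` with its equality case
`KL = 0 ↔ P = μ_β`.
-/

open MeasureTheory Real InformationTheory

/-- The relative entropy `Ent(P | λ) = ∫ (dP/dλ) log(dP/dλ) dλ`. -/
noncomputable def relEnt {X : Type*} [MeasurableSpace X] (P lam : Measure X) : ℝ :=
  ∫ x, (P.rnDeriv lam x).toReal * Real.log (P.rnDeriv lam x).toReal ∂lam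

section

variable {X : Type*} [MeasurableSpace X] {P μ : Measure X}

lemma rnDeriv_smul_llr_eq (P μ : Measure X) :
    (fun x => (P.rnDeriv μ x).toReal • llr P μ x) =
      fun x => (P.rnDeriv μ x).toReal * log (P.rnDeriv μ x).toReal :=
  rfl

lemma relEnt_eq_integral_llr [P.HaveLebesgueDecomposition μ] [SigmaFinite P] (hPμ : P ≪ μ) :
    relEnt P μ = ∫ x, llr P μ x ∂P := by
  rw [relEnt, ← rnDeriv_smul_llr_eq, integral_rnDeriv_smul hPμ]

lemma integrable_llr_iff [P.HaveLebesgueDecomposition μ] [SigmaFinite P] (hPμ : P ≪ μ) :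
    Integrable (llr P μ) P ↔
      Integrable (fun x => (P.rnDeriv μ x).toReal * log (P.rnDeriv μ x).toReal) μ := by
  rw [← rnDeriv_smul_llr_eq, integrable_rnDeriv_smul_iff hPμ]

lemma tilted_eq_smul_withDensity [NeZero μ] {f : X → ℝ}
    (hf : Integrable (fun x => exp (f x)) μ) :
    μ.tilted f = (ENNReal.ofReal (∫ x, exp (f x) ∂μ))⁻¹ •
      μ.withDensity (fun x => ENNReal.ofReal (exp (f x))) := by
  have hZ := integral_exp_pos hf
  rw [← withDensity_smul' _ _ (by simpa using hZ), Measure.tilted]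
  congr 1 with x
  rw [Pi.smul_apply, smul_eq_mul, ENNReal.ofReal_div_of_pos hZ, ENNReal.div_eq_inv_mul]

variable [IsProbabilityMeasure P] [IsProbabilityMeasure μ]

lemma integral_llr_nonneg (hPμ : P ≪ μ) : 0 ≤ ∫ x, llr P μ x ∂P := by
  rw [← toReal_klDiv_of_measure_eq hPμ (by simp)]
  exact ENNReal.toReal_nonneg

lemma integral_llr_eq_zero_iff (hPμ : P ≪ μ) (hint : Integrable (llr P μ) P) :
    ∫ x, llr P μ x ∂P = 0 ↔ P = μ := by
  rw [← toReal_klDiv_of_measure_eq hPμ (by simp), ENNReal.toReal_eq_zero_iff,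
    or_iff_left (klDiv_ne_top hPμ hint), klDiv_eq_zero_iff]

/-- The Donsker–Varadhan formula `log ∫ e^f dμ = sup_P (∫ f dP - Ent(P | μ))`, with the tilted
measure as its unique maximizer. -/
theorem integral_sub_relEnt_le_log_integral_exp {f : X → ℝ} (hPμ : P ≪ μ)
    (hfP : Integrable f P) (hfμ : Integrable (fun x => exp (f x)) μ)
    (hllr : Integrable (llr P μ) P) :
    ∫ x, f x ∂P - relEnt P μ ≤ log (∫ x, exp (f x) ∂μ) ∧
      (∫ x, f x ∂P - relEnt P μ = log (∫ x, exp (f x) ∂μ) ↔ P = μ.tilted f) := by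
  have : IsProbabilityMeasure (μ.tilted f) := isProbabilityMeasure_tilted hfμ
  have hPμf : P ≪ μ.tilted f := hPμ.trans (absolutelyContinuous_tilted hfμ)
  have hllr_tilted := integral_llr_tilted_right hPμ hfP hfμ hllr
  rw [← relEnt_eq_integral_llr hPμ] at hllr_tilted
  refine ⟨by linarith [integral_llr_nonneg hPμf], ?_⟩
  rw [← integral_llr_eq_zero_iff hPμf (integrable_llr_tilted_right hPμ hfP hllr hfμ),
    hllr_tilted]
  constructor <;> intro h <;> linarith

end

theorem gibbs_variational_principle_general
    {X : Type*} [MeasurableSpace X]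
    (lam : Measure X) [IsProbabilityMeasure lam]
    (β : ℝ) (hβ : 0 < β) (H : X → ℝ)
    (hexp : Integrable (fun x => Real.exp (-β * H x)) lam)
    (P : Measure X) [IsProbabilityMeasure P] (hac : P ≪ lam)
    (hent : Integrable
      (fun x => (P.rnDeriv lam x).toReal * Real.log (P.rnDeriv lam x).toReal) lam)
    (hHP : Integrable H P) :
    -β⁻¹ * Real.log (∫ x, Real.exp (-β * H x) ∂lam) ≤
        (∫ x, H x ∂P) + β⁻¹ * relEnt P lam ∧
      (-β⁻¹ * Real.log (∫ x, Real.exp (-β * H x) ∂lam) =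
          (∫ x, H x ∂P) + β⁻¹ * relEnt P lam ↔
        P = (ENNReal.ofReal (∫ x, Real.exp (-β * H x) ∂lam))⁻¹ •
          lam.withDensity (fun x => ENNReal.ofReal (Real.exp (-β * H x)))) := by
  obtain ⟨hle, heq⟩ := integral_sub_relEnt_le_log_integral_exp hac (hHP.const_mul (-β)) hexp
    ((integrable_llr_iff hac).2 hent)
  rw [integral_const_mul] at hle heq
  rw [← tilted_eq_smul_withDensity hexp, ← heq]
  set Z := ∫ x, exp (-β * H x) ∂lam
  have hgap : (∫ x, H x ∂P) + β⁻¹ * relEnt P lam - -β⁻¹ * log Z =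
      β⁻¹ * (log Z - (-β * ∫ x, H x ∂P - relEnt P lam)) := by
    field_simp
    ring
  constructor
  · have := mul_nonneg (inv_nonneg.2 hβ.le) (sub_nonneg.2 hle)
    linarith
  · rw [eq_comm, ← sub_eq_zero, hgap, mul_eq_zero, inv_eq_zero, or_iff_right hβ.ne',
      sub_eq_zero, eq_comm]

/-- Gibbs variational principle: `F_β(H) = -β⁻¹ log ∫ e^{-βH} dλ` satisfies
`F_β(H) ≤ ∫ H dP + β⁻¹ Ent(P | λ)` for every probability measure `P ≪ λ` with finite
relative entropy, with equality iff `P` is the Gibbs measure `e^{-βH} dλ / Z`. -/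
theorem gibbs_variational_principle
    {X : Type*} [MeasurableSpace X]
    (lam : Measure X) [IsProbabilityMeasure lam]
    (β : ℝ) (hβ : 0 < β) (H : X → ℝ) (hHmeas : Measurable H)
    (hexp : Integrable (fun x => Real.exp (-β * H x)) lam)
    (P : Measure X) [IsProbabilityMeasure P] (hac : P ≪ lam)
    (hent : Integrable
      (fun x => (P.rnDeriv lam x).toReal * Real.log (P.rnDeriv lam x).toReal) lam)
    (hHP : Integrable H P) :
    -β⁻¹ * Real.log (∫ x, Real.exp (-β * H x) ∂lam) ≤
        (∫ x, H x ∂P) + β⁻¹ * relEnt P lam ∧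
      (-β⁻¹ * Real.log (∫ x, Real.exp (-β * H x) ∂lam) =
          (∫ x, H x ∂P) + β⁻¹ * relEnt P lam ↔
        P = (ENNReal.ofReal (∫ x, Real.exp (-β * H x) ∂lam))⁻¹ •
          lam.withDensity (fun x => ENNReal.ofReal (Real.exp (-β * H x)))) :=
  gibbs_variational_principle_general lam β hβ H hexp P hac hent hHP
end

section
/- Let N ≥ 2, let ρ ∈ L¹(ℝ) be nonnegative with ∫ρ = N, ∫|r|ρ(r)dr < ∞, and let ℓ_1 < ⋯ < ℓ_{N-1} satisfy ∫_{ℓ_i}^{ℓ_{i+1}} ρ = 1 for i = 0, …, N−1 (with ℓ_0 = −∞, ℓ_N = +∞). Define v(r) = −Σ_{i=1}^{N-1} |r − ℓ_i|. Then for any points r_1, …, r_N with exactly one point in each interval (ℓ_{i}, ℓ_{i+1}), i = 0, …, N−1, the quantity −Σ_{1≤i<j≤N}|r_i − r_j| − Σ_{i=1}^N v(r_i) is constant (independent of the positions of the points within their intervals). -/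
open MeasureTheory Finset

private theorem oneDim_key (N : ℕ) (hN : 2 ≤ N) (ℓ : ℕ → ℝ)
    (hmono : ∀ i j, 1 ≤ i → i < j → j ≤ N - 1 → ℓ i < ℓ j)
    (L : ℕ → EReal)
    (hL : ∀ i, L i = if i = 0 then ⊥ else if i = N then ⊤ else ((ℓ i : ℝ) : EReal))
    (r : Fin N → ℝ)
    (hr : ∀ k : Fin N, L k < ((r k : ℝ) : EReal) ∧ ((r k : ℝ) : EReal) < L (k + 1)) :
    (-(∑ p ∈ Finset.univ.filter (fun p : Fin N × Fin N => p.1 < p.2), |r p.1 - r p.2|)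
      - ∑ i, -(∑ m ∈ Finset.Icc 1 (N - 1), |r i - ℓ m|)) =
    ∑ i : Fin N, ∑ m ∈ Finset.Icc 1 (N - 1), (if m ≤ (i : ℕ) then -ℓ m else ℓ m) := by
  have hlow : ∀ m : ℕ, 1 ≤ m → ∀ k : Fin N, m ≤ (k : ℕ) → ℓ m < r k := by
    intro m hm k hmk
    have hk1 : L (k : ℕ) < ((r k : ℝ) : EReal) := (hr k).1
    have hk0 : (k : ℕ) ≠ 0 := by omega
    have hkN : (k : ℕ) ≠ N := by have := k.2; omega
    rw [hL, if_neg hk0, if_neg hkN] at hk1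
    have hℓk : ℓ (k : ℕ) < r k := by exact_mod_cast hk1
    rcases eq_or_lt_of_le hmk with h | h
    · rw [h]; exact hℓk
    · exact lt_trans (hmono m k hm h (by have := k.2; omega)) hℓk
  have hhigh : ∀ m : ℕ, m ≤ N - 1 → ∀ k : Fin N, (k : ℕ) < m → r k < ℓ m := by
    intro m hm k hkm
    have hk2 : ((r k : ℝ) : EReal) < L ((k : ℕ) + 1) := (hr k).2
    have h0 : (k : ℕ) + 1 ≠ 0 := by omega
    have hN' : (k : ℕ) + 1 ≠ N := by omega
    rw [hL, if_neg h0, if_neg hN'] at hk2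
    have hℓ : r k < ℓ ((k : ℕ) + 1) := by exact_mod_cast hk2
    rcases eq_or_lt_of_le (Nat.succ_le_of_lt hkm) with h | h
    · rw [← h]; exact hℓ
    · exact lt_trans hℓ (hmono _ m (by omega) h hm)
  have hord : ∀ i j : Fin N, i < j → r i < r j := by
    intro i j hij
    have hij' : (i : ℕ) < (j : ℕ) := hij
    have h1 : r i < ℓ ((i : ℕ) + 1) :=
      hhigh _ (by have := j.2; omega) i (Nat.lt_succ_self _)
    have h2 : ℓ ((i : ℕ) + 1) < r j := hlow _ (by omega) j (by omega)
    exact h1.trans h2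
  have hA : (∑ p ∈ Finset.univ.filter (fun p : Fin N × Fin N => p.1 < p.2), |r p.1 - r p.2|)
      = ∑ p ∈ Finset.univ.filter (fun p : Fin N × Fin N => p.1 < p.2), (r p.2 - r p.1) := by
    refine Finset.sum_congr rfl fun p hp => ?_
    simp only [Finset.mem_filter] at hp
    have := hord p.1 p.2 hp.2
    rw [abs_sub_comm, abs_of_pos (by linarith)]
  have hB : ∀ (i : Fin N) (m : ℕ), m ∈ Finset.Icc 1 (N - 1) →
      |r i - ℓ m| = if m ≤ (i : ℕ) then r i - ℓ m else ℓ m - r i := by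
    intro i m hm
    rw [Finset.mem_Icc] at hm
    split_ifs with h
    · exact abs_of_pos (by linarith [hlow m hm.1 i h])
    · rw [abs_sub_comm]
      exact abs_of_pos (by linarith [hhigh m hm.2 i (by omega)])
  have hsplit : ∀ i : Fin N, (∑ m ∈ Finset.Icc 1 (N - 1), |r i - ℓ m|)
      = (∑ m ∈ Finset.Icc 1 (N - 1), (if m ≤ (i : ℕ) then r i else -r i))
        + ∑ m ∈ Finset.Icc 1 (N - 1), (if m ≤ (i : ℕ) then -ℓ m else ℓ m) := by
    intro i
    rw [← Finset.sum_add_distrib]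
    refine Finset.sum_congr rfl fun m hm => ?_
    rw [hB i m hm]
    split_ifs <;> ring
  have hcount : ∀ i : Fin N, (∑ m ∈ Finset.Icc 1 (N - 1), (if m ≤ (i : ℕ) then r i else -r i))
      = (i : ℕ) • r i + (N - 1 - (i : ℕ)) • (-r i) := by
    intro i
    have hi := i.2
    rw [Finset.sum_ite, Finset.sum_const, Finset.sum_const]
    congr 2
    · have h1 : (Finset.Icc 1 (N - 1)).filter (fun m => m ≤ (i : ℕ))
          = Finset.Icc 1 (i : ℕ) := by
        ext m; simp only [Finset.mem_filter, Finset.mem_Icc]; omega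
      rw [h1, Nat.card_Icc]; omega
    · have h2 : (Finset.Icc 1 (N - 1)).filter (fun m => ¬ m ≤ (i : ℕ))
          = Finset.Icc ((i : ℕ) + 1) (N - 1) := by
        ext m; simp only [Finset.mem_filter, Finset.mem_Icc]; omega
      rw [h2, Nat.card_Icc]; omega
  have hpair : (∑ p ∈ Finset.univ.filter (fun p : Fin N × Fin N => p.1 < p.2), (r p.2 - r p.1))
      = (∑ j : Fin N, (j : ℕ) • r j) - ∑ i : Fin N, (N - 1 - (i : ℕ)) • r i := by
    rw [Finset.sum_sub_distrib]
    congr 1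
    · rw [Finset.sum_filter, Fintype.sum_prod_type, Finset.sum_comm]
      refine Finset.sum_congr rfl fun j _ => ?_
      rw [← Finset.sum_filter]
      show (∑ _a ∈ Finset.univ.filter (fun a : Fin N => (a, j).1 < (a, j).2), r j) = _
      rw [Finset.sum_const]
      congr 1
      have h3 : (Finset.univ.filter fun a : Fin N => (a, j).1 < (a, j).2) = Finset.Iio j := by
        ext x; simp
      rw [h3, Fin.card_Iio]
    · rw [Finset.sum_filter, Fintype.sum_prod_type]
      refine Finset.sum_congr rfl fun i _ => ?_
      rw [← Finset.sum_filter]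
      show (∑ _a ∈ Finset.univ.filter (fun a : Fin N => (i, a).1 < (i, a).2), r i) = _
      rw [Finset.sum_const]
      congr 1
      have h4 : (Finset.univ.filter fun a : Fin N => (i, a).1 < (i, a).2) = Finset.Ioi i := by
        ext x; simp
      rw [h4, Fin.card_Ioi]
  have h1 : (∑ i : Fin N, ∑ m ∈ Finset.Icc 1 (N - 1), |r i - ℓ m|)
      = (∑ i : Fin N, ((i : ℕ) • r i + (N - 1 - (i : ℕ)) • (-r i)))
        + ∑ i : Fin N, ∑ m ∈ Finset.Icc 1 (N - 1), (if m ≤ (i : ℕ) then -ℓ m else ℓ m) := by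
    rw [← Finset.sum_add_distrib]
    exact Finset.sum_congr rfl fun i _ => (hsplit i).trans (by rw [hcount i])
  rw [hA, hpair, Finset.sum_neg_distrib, sub_neg_eq_add, h1, Finset.sum_add_distrib]
  simp only [smul_neg, Finset.sum_neg_distrib]
  ring

/-- In one dimension, with `v(r) = -Σ_{i=1}^{N-1} |r - ℓ_i|` for the breakpoints `ℓ_i` of
`ρ` into pieces of unit mass, the quantity `-Σ_{i<j}|r_i - r_j| - Σ_i v(r_i)` is the same
for any two configurations having one point in each interval `(ℓ_i, ℓ_{i+1})`. -/
theorem oneDim_cost_minus_potential_constant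
    (N : ℕ) (hN : 2 ≤ N)
    (ρ : ℝ → ℝ) (hρint : Integrable ρ volume) (hρpos : ∀ x, 0 ≤ ρ x)
    (hmass : ∫ x, ρ x = N)
    (hmom : Integrable (fun x => |x| * ρ x) volume)
    (ℓ : ℕ → ℝ)
    (hmono : ∀ i j, 1 ≤ i → i < j → j ≤ N - 1 → ℓ i < ℓ j)
    (hfirst : ∫ x in Set.Iic (ℓ 1), ρ x = 1)
    (hmid : ∀ i, 1 ≤ i → i ≤ N - 2 → ∫ x in Set.Ioc (ℓ i) (ℓ (i + 1)), ρ x = 1)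
    (hlast : ∫ x in Set.Ioi (ℓ (N - 1)), ρ x = 1)
    (v : ℝ → ℝ) (hv : ∀ x, v x = -(∑ i ∈ Finset.Icc 1 (N - 1), |x - ℓ i|))
    (L : ℕ → EReal)
    (hL : ∀ i, L i = if i = 0 then ⊥ else if i = N then ⊤ else ((ℓ i : ℝ) : EReal)) :
    ∀ r s : Fin N → ℝ,
      (∀ k : Fin N, L k < ((r k : ℝ) : EReal) ∧ ((r k : ℝ) : EReal) < L (k + 1)) →
      (∀ k : Fin N, L k < ((s k : ℝ) : EReal) ∧ ((s k : ℝ) : EReal) < L (k + 1)) →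
      (-(∑ p ∈ Finset.univ.filter (fun p : Fin N × Fin N => p.1 < p.2),
            |r p.1 - r p.2|) - ∑ i, v (r i)) =
      (-(∑ p ∈ Finset.univ.filter (fun p : Fin N × Fin N => p.1 < p.2),
            |s p.1 - s p.2|) - ∑ i, v (s i)) := by
  intro r s hr hs
  simp only [hv]
  rw [oneDim_key N hN ℓ hmono L hL r hr, oneDim_key N hN ℓ hmono L hL s hs]
end

section
/- Let d ≥ 3 and t(r) = −(r/|r|)(1 − |r|³)^{1/3} for r in the unit ball B₁ of ℝ³ minus the origin. Then t is an involution of B₁ \ {0} onto itself (t(t(r)) = r), |t(r)|³ = 1 − |r|³, and the pushforward of the normalized uniform measure on B₁ under t is again the normalized uniform measure on B₁. -/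
/-!
In polar coordinates `t` reverses the direction and replaces the radius `s` by
`u(s) = (1 - s³)^{1/3}`. Since `u³ = 1 - s³`, `u` is an involution of `[0, 1]`, hence `t` is an
involution of the punctured ball. A radial map `r ↦ (φ(|r|) / |r|) • r` of `ℝⁿ` has Jacobian
`(φ(s) / s)^(n-1) φ'(s)`; for `φ = -u` one has `φ' = s² / u²`, so in dimension three the Jacobian is
`(u / s)² (s² / u²) = 1`. The change-of-variables formula on the punctured ball, which has full
measure in the ball, then shows that `t` preserves Lebesgue measure there.
-/

open MeasureTheory Metric Module Set

section RadialMap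

variable {E : Type*} [NormedAddCommGroup E] [InnerProductSpace ℝ E]

theorem hasFDerivAt_norm_of_ne_zero {x : E} (hx : x ≠ 0) :
    HasFDerivAt (fun y : E => ‖y‖) (‖x‖⁻¹ • innerSL ℝ x) x := by
  have hsq : ‖x‖ ^ 2 ≠ 0 := pow_ne_zero _ (norm_ne_zero_iff.mpr hx)
  have h := (Real.hasDerivAt_sqrt hsq).comp_hasFDerivAt x (hasStrictFDerivAt_norm_sq x).hasFDerivAt
  simp only [Function.comp_def, Real.sqrt_sq (norm_nonneg _)] at h
  refine h.congr_fderiv ?_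
  ext v
  simp only [one_div, mul_inv_rev, smul_apply, coe_innerSL_apply, nsmul_eq_mul, Nat.cast_ofNat,
    smul_eq_mul]
  field_simp

noncomputable def radialFDeriv (φ : ℝ → ℝ) (φ' : ℝ) (x : E) : E →L[ℝ] E :=
  (φ ‖x‖ / ‖x‖) • ContinuousLinearMap.id ℝ E +
    ((φ' - φ ‖x‖ / ‖x‖) / ‖x‖ ^ 2) • (innerSL ℝ x).smulRight x

theorem hasFDerivAt_radial {φ : ℝ → ℝ} {φ' : ℝ} {x : E} (hφ : HasDerivAt φ φ' ‖x‖)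
    (hx : x ≠ 0) :
    HasFDerivAt (fun y : E => (φ ‖y‖ / ‖y‖) • y) (radialFDeriv φ φ' x) x := by
  have hn : ‖x‖ ≠ 0 := norm_ne_zero_iff.mpr hx
  have hc := ((hφ.div (hasDerivAt_id _) hn).comp_hasFDerivAt x
    (hasFDerivAt_norm_of_ne_zero hx)).smul (hasFDerivAt_id x)
  refine HasFDerivAt.congr_fderiv (f := fun y : E => (φ ‖y‖ / ‖y‖) • y) hc ?_
  ext v
  simp only [radialFDeriv, Function.comp_apply, Pi.div_apply, id_eq, mul_one, smul_smul,
    add_apply, smul_apply, ContinuousLinearMap.id_apply, ContinuousLinearMap.smulRight_apply,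
    coe_innerSL_apply, smul_eq_mul, add_right_inj]
  congr 1
  field_simp

theorem det_smul_id_add_smul_smulRight_innerSL [FiniteDimensional ℝ E] {a : ℝ} (ha : a ≠ 0)
    (c : ℝ) {x : E} (hx : x ≠ 0) :
    (a • ContinuousLinearMap.id ℝ E + c • (innerSL ℝ x).smulRight x).det =
      a ^ (finrank ℝ E - 1) * (a + c * ‖x‖ ^ 2) := by
  have : Nontrivial E := ⟨⟨x, 0, hx⟩⟩
  have hE : finrank ℝ E - 1 + 1 = finrank ℝ E := Nat.sub_add_cancel finrank_pos
  have htrans : ((a • ContinuousLinearMap.id ℝ E + c • (innerSL ℝ x).smulRight x :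
      E →L[ℝ] E) : E →ₗ[ℝ] E) = a • LinearMap.transvection ((a⁻¹ * c) • innerₛₗ ℝ x) x := by
    ext v
    simp only [ContinuousLinearMap.toLinearMap_add, ContinuousLinearMap.toLinearMap_smul,
      ContinuousLinearMap.coe_id, ContinuousLinearMap.coe_smulRight,
      ContinuousLinearMap.toLinearMap_innerSL_apply, LinearMap.add_apply, LinearMap.smul_apply,
      LinearMap.id_coe, id_eq, LinearMap.coe_smulRight, innerₛₗ_apply_apply, smul_smul,
      LinearMap.transvection.apply, smul_eq_mul, smul_add, add_right_inj]
    congr 1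
    field_simp
  rw [ContinuousLinearMap.det, htrans, LinearMap.det_smul, LinearMap.transvection.det, ← hE]
  simp only [LinearMap.smul_apply, innerₛₗ_apply_apply, inner_self_eq_norm_sq_to_K,
    Real.ringHom_apply, smul_eq_mul, add_tsub_cancel_right]
  field_simp
  ring

theorem det_radialFDeriv [FiniteDimensional ℝ E] {φ : ℝ → ℝ} (φ' : ℝ) {x : E} (hx : x ≠ 0)
    (hφ : φ ‖x‖ ≠ 0) :
    (radialFDeriv φ φ' x).det = (φ ‖x‖ / ‖x‖) ^ (finrank ℝ E - 1) * φ' := by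
  have hn : ‖x‖ ≠ 0 := norm_ne_zero_iff.mpr hx
  rw [radialFDeriv, det_smul_id_add_smul_smulRight_innerSL (div_ne_zero hφ hn) _ hx]
  field_simp
  ring

end RadialMap

theorem map_restrict_eq_restrict_of_invOn {E : Type*} [NormedAddCommGroup E] [NormedSpace ℝ E]
    [FiniteDimensional ℝ E] [MeasurableSpace E] [BorelSpace E] (μ : Measure E)
    [μ.IsAddHaarMeasure] {f : E → E} {f' : E → E →L[ℝ] E} {s : Set E} (hs : MeasurableSet s)
    (hmaps : MapsTo f s s) (hinv : InvOn f f s s)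
    (hf' : ∀ x ∈ s, HasFDerivWithinAt f (f' x) s x) (hdet : ∀ x ∈ s, |(f' x).det| = 1) :
    Measure.map f (μ.restrict s) = μ.restrict s := by
  have hbij : BijOn f s s := hinv.bijOn hmaps hmaps
  have hdens : (fun x => ENNReal.ofReal |(f' x).det|) =ᵐ[μ.restrict s] 1 :=
    (ae_restrict_iff' hs).mpr (.of_forall fun x hx => by simp [hdet x hx])
  have h := map_withDensity_abs_det_fderiv_eq_addHaar μ hs.nullMeasurableSet hf' hbij.injOn
  rwa [withDensity_congr_ae hdens, withDensity_one, hbij.image_eq] at h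

noncomputable def seidlRadius (s : ℝ) : ℝ := (1 - s ^ 3) ^ ((1 : ℝ) / 3)

section SeidlRadius

variable {s : ℝ}

theorem seidlRadius_nonneg (h0 : 0 ≤ s) (h1 : s ≤ 1) : 0 ≤ seidlRadius s :=
  Real.rpow_nonneg (sub_nonneg.mpr (pow_le_one₀ h0 h1)) _

theorem seidlRadius_pos (h0 : 0 ≤ s) (h1 : s < 1) : 0 < seidlRadius s :=
  Real.rpow_pos_of_pos (sub_pos.mpr (pow_lt_one₀ h0 h1 three_ne_zero)) _

theorem seidlRadius_lt_one (h0 : 0 < s) (h1 : s ≤ 1) : seidlRadius s < 1 :=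
  Real.rpow_lt_one (sub_nonneg.mpr (pow_le_one₀ h0.le h1)) (sub_lt_self _ (pow_pos h0 3))
    (by norm_num)

theorem seidlRadius_pow_three (h0 : 0 ≤ s) (h1 : s ≤ 1) : seidlRadius s ^ 3 = 1 - s ^ 3 := by
  rw [seidlRadius, ← Real.rpow_mul_natCast (sub_nonneg.mpr (pow_le_one₀ h0 h1))]
  norm_num

theorem seidlRadius_seidlRadius (h0 : 0 ≤ s) (h1 : s ≤ 1) : seidlRadius (seidlRadius s) = s := by
  rw [seidlRadius, seidlRadius_pow_three h0 h1, sub_sub_cancel, one_div,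
    ← Nat.cast_ofNat (R := ℝ), Real.pow_rpow_inv_natCast h0 three_ne_zero]

theorem hasDerivAt_seidlRadius (h0 : 0 ≤ s) (h1 : s < 1) :
    HasDerivAt seidlRadius (-(s ^ 2 / seidlRadius s ^ 2)) s := by
  have hpos : 0 < 1 - s ^ 3 := sub_pos.mpr (pow_lt_one₀ h0 h1 three_ne_zero)
  have hu := seidlRadius_pos h0 h1
  have hd := ((hasDerivAt_pow 3 s).const_sub 1).rpow_const (p := (1 : ℝ) / 3) (.inl hpos.ne')
  refine hd.congr_deriv ?_
  rw [Real.rpow_sub hpos, Real.rpow_one, ← seidlRadius, ← seidlRadius_pow_three h0 h1.le]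
  field_simp
  norm_num

end SeidlRadius

noncomputable def seidlMap {E : Type*} [NormedAddCommGroup E] [NormedSpace ℝ E] (r : E) : E :=
  (-seidlRadius ‖r‖ / ‖r‖) • r

section SeidlMap

variable {E : Type*} [NormedAddCommGroup E] [NormedSpace ℝ E] {r : E}

theorem norm_seidlMap (hr : r ≠ 0) (h1 : ‖r‖ ≤ 1) : ‖seidlMap r‖ = seidlRadius ‖r‖ := by
  have hn : 0 < ‖r‖ := norm_pos_iff.mpr hr
  rw [seidlMap, norm_smul, norm_div, norm_neg, Real.norm_of_nonneg (seidlRadius_nonneg hn.le h1),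
    norm_norm, div_mul_cancel₀ _ hn.ne']

theorem mapsTo_seidlMap :
    MapsTo (seidlMap (E := E)) (ball 0 1 \ {0}) (ball 0 1 \ {0}) := by
  rintro r ⟨hb, hr⟩
  have hr : r ≠ 0 := hr
  have h1 := mem_ball_zero_iff.mp hb
  have hn : 0 < ‖r‖ := norm_pos_iff.mpr hr
  refine ⟨mem_ball_zero_iff.mpr ?_, fun h0 => ?_⟩
  · rw [norm_seidlMap hr h1.le]
    exact seidlRadius_lt_one hn h1.le
  · have := norm_seidlMap hr h1.le
    rw [show seidlMap r = 0 from h0, norm_zero] at this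
    exact (seidlRadius_pos hn.le h1).ne this

theorem seidlMap_seidlMap (hr : r ≠ 0) (h1 : ‖r‖ < 1) : seidlMap (seidlMap r) = r := by
  have hn : 0 < ‖r‖ := norm_pos_iff.mpr hr
  have hu : 0 < seidlRadius ‖r‖ := seidlRadius_pos hn.le h1
  rw [seidlMap, norm_seidlMap hr h1.le, seidlRadius_seidlRadius hn.le h1.le, seidlMap, smul_smul]
  convert one_smul ℝ r
  field_simp

theorem invOn_seidlMap : InvOn (seidlMap (E := E)) seidlMap (ball 0 1 \ {0}) (ball 0 1 \ {0}) :=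
  have h : LeftInvOn (seidlMap (E := E)) seidlMap (ball 0 1 \ {0}) :=
    fun _ ⟨hb, hr⟩ => seidlMap_seidlMap hr (mem_ball_zero_iff.mp hb)
  ⟨h, h⟩

end SeidlMap

section SeidlJacobian

variable {E : Type*} [NormedAddCommGroup E] [InnerProductSpace ℝ E] {r : E}

theorem hasFDerivAt_seidlMap (hr : r ≠ 0) (h1 : ‖r‖ < 1) :
    HasFDerivAt seidlMap
      (radialFDeriv (fun s => -seidlRadius s) (‖r‖ ^ 2 / seidlRadius ‖r‖ ^ 2) r) r := by
  have hφ := (hasDerivAt_seidlRadius (norm_nonneg r) h1).neg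
  rw [neg_neg] at hφ
  exact hasFDerivAt_radial hφ hr

theorem det_radialFDeriv_seidl [FiniteDimensional ℝ E] (hE : finrank ℝ E = 3) (hr : r ≠ 0)
    (h1 : ‖r‖ < 1) :
    (radialFDeriv (fun s => -seidlRadius s) (‖r‖ ^ 2 / seidlRadius ‖r‖ ^ 2) r).det = 1 := by
  have hn : 0 < ‖r‖ := norm_pos_iff.mpr hr
  have hu : 0 < seidlRadius ‖r‖ := seidlRadius_pos hn.le h1
  rw [det_radialFDeriv (φ := fun s => -seidlRadius s) _ hr (neg_ne_zero.mpr hu.ne'), hE,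
    Nat.add_one_sub_one, neg_div, neg_sq, div_pow]
  field_simp

end SeidlJacobian

/-- The Seidl co-motion map `t(r) = -(r/|r|)(1 - |r|³)^{1/3}` is an involution of the punctured
unit ball of `ℝ³`, satisfies `|t(r)|³ = 1 - |r|³`, and pushes the normalized uniform measure
on the unit ball forward to itself. -/
theorem seidl_map_involution_and_measurePreserving
    (t : EuclideanSpace ℝ (Fin 3) → EuclideanSpace ℝ (Fin 3))
    (ht : ∀ r, t r = -(((1 - ‖r‖ ^ 3) ^ ((1 : ℝ) / 3) / ‖r‖) • r)) :
    (∀ r ∈ ball (0 : EuclideanSpace ℝ (Fin 3)) 1 \ {0},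
        t r ∈ ball (0 : EuclideanSpace ℝ (Fin 3)) 1 \ {0} ∧
        t (t r) = r ∧
        ‖t r‖ ^ 3 = 1 - ‖r‖ ^ 3) ∧
    Measure.map t
        ((volume (ball (0 : EuclideanSpace ℝ (Fin 3)) 1))⁻¹ •
          volume.restrict (ball (0 : EuclideanSpace ℝ (Fin 3)) 1)) =
      (volume (ball (0 : EuclideanSpace ℝ (Fin 3)) 1))⁻¹ •
        volume.restrict (ball (0 : EuclideanSpace ℝ (Fin 3)) 1) := by
  obtain rfl : t = seidlMap :=
    funext fun r => by rw [ht, seidlMap, neg_div, neg_smul, seidlRadius]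
  refine ⟨fun r ⟨hb, hr⟩ => ?_, ?_⟩
  · have h1 : ‖r‖ < 1 := mem_ball_zero_iff.mp hb
    refine ⟨mapsTo_seidlMap ⟨hb, hr⟩, seidlMap_seidlMap hr h1, ?_⟩
    rw [norm_seidlMap hr h1.le, seidlRadius_pow_three (norm_nonneg r) h1.le]
  have hball : volume.restrict (ball (0 : EuclideanSpace ℝ (Fin 3)) 1) =
      volume.restrict (ball 0 1 \ {0}) :=
    (Measure.restrict_congr_set (sdiff_null_ae_eq_self (measure_singleton 0))).symm
  rw [Measure.map_smul, hball, map_restrict_eq_restrict_of_invOn volume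
    (isOpen_ball.sdiff isClosed_singleton).measurableSet mapsTo_seidlMap invOn_seidlMap]
  · exact fun r ⟨hb, hr⟩ => (hasFDerivAt_seidlMap hr (mem_ball_zero_iff.mp hb)).hasFDerivWithinAt
  · intro r ⟨hb, hr⟩
    rw [det_radialFDeriv_seidl finrank_euclideanSpace_fin hr (mem_ball_zero_iff.mp hb), abs_one]
end
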